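/- Let η1, η2, η3, η4 be positive integers with η2, η3, η4 pairwise coprime. Then ∑_{k3 | η1, gcd(k3, η2η3) = 1} (μ(k3)/k3) · ∑_{k2 | η1η2, gcd(k2, k3η4) = 1} (μ(k2)/k2) = φ*(gcd(η1, η3η4))·φ*(η2)·∏_{p | η1, p ∤ η2η3η4} (1 − 2/p), where μ is the Möbius function and the sums over k2, k3 range over positive divisors. -/

import Mathlib

open ArithmeticFunction

noncomputable section

/-- `φ*(n) = ∏_{p | n} (1 - 1/p)`. -/
def phiStar (n : ℕ) : ℝ := ∏ p ∈ n.primeFactors, (1 - 1 / (p : ℝ))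

/-!
Both sums only see squarefree divisors, so they are sums over sets of primes. The inner sum is
`∏ (1 - 1/p)` over the primes `p ∣ η1η2` with `p ∤ k3η4`. Writing `k3 = ∏ t` with `t` a subset of
`P = {p ∣ η1, p ∤ η2η3}` and `Q = {p ∣ η1η2, p ∤ η4}`, the outer summand becomes
`∏_{p ∈ t} (-1/p) · ∏_{p ∈ Q \ t} (1 - 1/p)`, and summing over `t ⊆ P` factors into
`∏_{Q \ P} (1 - 1/p)` times the local factors `1 - 2/p` (for `p ∈ P`, `p ∤ η4`) and `1 - 1/p`
(for `p ∈ P`, `p ∣ η4`). Since `η2, η3, η4` are pairwise coprime, the primes carrying a factor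
`1 - 1/p` are exactly those of `gcd(η1, η3η4)` and of `η2`, each counted once.
-/

open Finset

lemma Nat.squarefree_prod_primes {t : Finset ℕ} (ht : ∀ p ∈ t, p.Prime) :
    Squarefree (∏ p ∈ t, p) :=
  squarefree_prod_of_pairwise_isCoprime
    (fun p hp q hq hpq =>
      Nat.coprime_iff_isRelPrime.mp ((Nat.coprime_primes (ht p hp) (ht q hq)).mpr hpq))
    fun p hp => (ht p hp).squarefree

lemma Nat.prime_of_mem_of_mem_powerset {n : ℕ} {s t : Finset ℕ} (hs : s ⊆ n.primeFactors)
    (ht : t ∈ s.powerset) : ∀ p ∈ t, p.Prime :=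
  fun _ hp => Nat.prime_of_mem_primeFactors (hs (mem_powerset.1 ht hp))

lemma Finset.sum_powerset_prod_mul_prod_sdiff {ι R : Type*} [CommSemiring R] [DecidableEq ι]
    (s u : Finset ι) (f g : ι → R) :
    ∑ t ∈ s.powerset, (∏ i ∈ t, f i) * ∏ i ∈ u \ t, g i =
      (∏ i ∈ u \ s, g i) * ∏ i ∈ s, (f i + if i ∈ u then g i else 1) := by
  rw [prod_add, mul_sum]
  refine sum_congr rfl fun t ht => ?_
  have hts := mem_powerset.1 ht
  rw [prod_ite_mem, mul_left_comm, ← prod_union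
    (disjoint_sdiff_self_left.mono_right (inter_subset_left.trans sdiff_subset))]
  congr 2
  ext i
  simp only [mem_union, mem_sdiff, mem_inter]
  have := @hts i
  tauto

lemma Nat.sum_divisors_filter_coprime_eq_sum_powerset {M : Type*} [AddCommMonoid M] {n : ℕ}
    (hn : n ≠ 0) (m : ℕ) {F : ℕ → M} (hF : ∀ k, ¬ Squarefree k → F k = 0) :
    ∑ k ∈ n.divisors with k.Coprime m, F k =
      ∑ t ∈ {p ∈ n.primeFactors | ¬ p ∣ m}.powerset, F (∏ p ∈ t, p) := by
  rw [← sum_filter_of_ne (p := Squarefree) fun k _ hk => not_imp_comm.1 (hF k) hk, filter_filter]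
  refine sum_nbij' Nat.primeFactors (fun t => ∏ p ∈ t, p) ?_ ?_ ?_ ?_ ?_
  · simp only [mem_filter, Nat.mem_divisors, mem_powerset]
    rintro k ⟨⟨hkn, -⟩, hkm, -⟩ p hp
    have hpp := Nat.prime_of_mem_primeFactors hp
    exact mem_filter.2 ⟨Nat.primeFactors_mono hkn hn hp, fun hpm =>
      Nat.Prime.not_coprime_iff_dvd.2 ⟨p, hpp, Nat.dvd_of_mem_primeFactors hp, hpm⟩ hkm⟩
  · intro t ht
    have htp := Nat.prime_of_mem_of_mem_powerset (filter_subset _ _) ht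
    have hts := mem_powerset.1 ht
    simp only [mem_filter, Nat.mem_divisors]
    refine ⟨⟨prod_primes_dvd n (fun p hp => (htp p hp).prime) fun p hp => ?_, hn⟩,
      Nat.Coprime.prod_left fun p hp => ?_, Nat.squarefree_prod_primes htp⟩
    · exact Nat.dvd_of_mem_primeFactors (mem_filter.1 (hts hp)).1
    · exact (Nat.Prime.coprime_iff_not_dvd (htp p hp)).2 (mem_filter.1 (hts hp)).2
  · intro k hk
    exact Nat.prod_primeFactors_of_squarefree (mem_filter.1 hk).2.2
  · intro t ht
    exact Nat.primeFactors_prod (Nat.prime_of_mem_of_mem_powerset (filter_subset _ _) ht)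
  · intro k hk
    rw [Nat.prod_primeFactors_of_squarefree (mem_filter.1 hk).2.2]

lemma moebius_div_prod_primes {t : Finset ℕ} (ht : ∀ p ∈ t, p.Prime) :
    ((moebius (∏ p ∈ t, p) : ℤ) : ℝ) / ((∏ p ∈ t, p : ℕ) : ℝ) = ∏ p ∈ t, (-1 / (p : ℝ)) := by
  rw [isMultiplicative_moebius.map_prod_of_prime t ht, Nat.cast_prod, Int.cast_prod,
    ← prod_div_distrib]
  exact prod_congr rfl fun p hp => by rw [moebius_apply_prime (ht p hp)]; norm_num

lemma sum_divisors_coprime_moebius_div {n : ℕ} (hn : n ≠ 0) (m : ℕ) :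
    ∑ k ∈ n.divisors with k.Coprime m, ((moebius k : ℤ) : ℝ) / k =
      ∏ p ∈ n.primeFactors with ¬ p ∣ m, (1 - 1 / (p : ℝ)) := by
  rw [Nat.sum_divisors_filter_coprime_eq_sum_powerset hn m fun k hk => by
    simp [moebius_eq_zero_of_not_squarefree hk]]
  rw [sum_congr rfl fun t ht =>
    moebius_div_prod_primes (Nat.prime_of_mem_of_mem_powerset (filter_subset _ _) ht),
    ← prod_one_add]
  exact prod_congr rfl fun _ _ => by ring

lemma Nat.filter_primeFactors_not_dvd_prod_mul {t : Finset ℕ} (ht : ∀ p ∈ t, p.Prime) (n m : ℕ) :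
    {p ∈ n.primeFactors | ¬ p ∣ (∏ q ∈ t, q) * m} = {p ∈ n.primeFactors | ¬ p ∣ m} \ t := by
  have h0 : ∏ q ∈ t, q ≠ 0 := prod_ne_zero_iff.2 fun q hq => (ht q hq).ne_zero
  ext p
  by_cases hp : p.Prime
  · have hdvd := Nat.mem_primeFactors_of_ne_zero (p := p) h0
    rw [Nat.primeFactors_prod ht] at hdvd
    simp only [mem_filter, mem_sdiff, hp.dvd_mul]
    tauto
  · simp [hp]

lemma prod_neg_one_div_add_ite_mem_filter_not_dvd {n m : ℕ} {s : Finset ℕ}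
    (hs : s ⊆ n.primeFactors) :
    ∏ p ∈ s, (-1 / (p : ℝ) + if p ∈ {q ∈ n.primeFactors | ¬ q ∣ m} then 1 - 1 / (p : ℝ) else 1) =
      (∏ p ∈ s with p ∣ m, (1 - 1 / (p : ℝ))) * ∏ p ∈ s with ¬ p ∣ m, (1 - 2 / (p : ℝ)) := by
  rw [← prod_ite]
  refine prod_congr rfl fun p hp => ?_
  by_cases hpm : p ∣ m
  · simp only [mem_filter, hs hp, hpm, not_true_eq_false, and_false, if_false, if_true]
    ring
  · simp only [mem_filter, hs hp, hpm, not_false_eq_true, and_self, if_false, if_true]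
    ring

lemma phiStar_gcd_mul_phiStar {η1 η2 η3 η4 : ℕ} (h1 : η1 ≠ 0) (h2 : η2 ≠ 0)
    (h23 : η2.Coprime η3) (h24 : η2.Coprime η4) (h34 : η3.Coprime η4) :
    phiStar (Nat.gcd η1 (η3 * η4)) * phiStar η2 =
      (∏ p ∈ {p ∈ (η1 * η2).primeFactors | ¬ p ∣ η4} \ {p ∈ η1.primeFactors | ¬ p ∣ η2 * η3},
          (1 - 1 / (p : ℝ))) *
        ∏ p ∈ {p ∈ η1.primeFactors | ¬ p ∣ η2 * η3} with p ∣ η4, (1 - 1 / (p : ℝ)) := by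
  have hunion : (Nat.gcd η1 (η3 * η4)).primeFactors ∪ η2.primeFactors =
      {p ∈ (η1 * η2).primeFactors | ¬ p ∣ η4} \ {p ∈ η1.primeFactors | ¬ p ∣ η2 * η3} ∪
        {p ∈ {p ∈ η1.primeFactors | ¬ p ∣ η2 * η3} | p ∣ η4} := by
    ext p
    by_cases hp : p.Prime
    · have h24p := fun h2 h4 => Nat.Prime.not_coprime_iff_dvd.2 ⟨p, hp, h2, h4⟩ h24
      have h34p := fun h3 h4 => Nat.Prime.not_coprime_iff_dvd.2 ⟨p, hp, h3, h4⟩ h34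
      simp only [mem_union, mem_sdiff, mem_filter, Nat.mem_primeFactors, Nat.dvd_gcd_iff,
        hp.dvd_mul, hp, h1, h2, Nat.gcd_eq_zero_iff, mul_eq_zero, ne_eq, false_or, false_and,
        not_false_eq_true, true_and, and_true]
      tauto
    · simp [hp]
  have hdisj : Disjoint (Nat.gcd η1 (η3 * η4)).primeFactors η2.primeFactors :=
    Nat.Coprime.disjoint_primeFactors <|
      (h23.symm.mul_left h24.symm).coprime_dvd_left (Nat.gcd_dvd_right _ _)
  rw [phiStar, phiStar, ← prod_union hdisj, hunion,
    prod_union (disjoint_sdiff_self_left.mono_right (filter_subset _ _))]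

theorem moebius_double_sum_general (η1 η2 η3 η4 : ℕ)
    (h1 : 0 < η1) (h2 : 0 < η2)
    (h23 : Nat.Coprime η2 η3) (h24 : Nat.Coprime η2 η4) (h34 : Nat.Coprime η3 η4) :
    (∑ k3 ∈ η1.divisors.filter (fun k => Nat.Coprime k (η2 * η3)),
      ((moebius k3 : ℤ) : ℝ) / (k3 : ℝ) *
        ∑ k2 ∈ (η1 * η2).divisors.filter (fun k => Nat.Coprime k (k3 * η4)),
          ((moebius k2 : ℤ) : ℝ) / (k2 : ℝ))
      = phiStar (Nat.gcd η1 (η3 * η4)) * phiStar η2 *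
          ∏ p ∈ η1.primeFactors.filter (fun p => ¬ p ∣ η2 * η3 * η4), (1 - 2 / (p : ℝ)) := by
  have h12 : η1 * η2 ≠ 0 := mul_ne_zero h1.ne' h2.ne'
  set P := {p ∈ η1.primeFactors | ¬ p ∣ η2 * η3}
  set Q := {p ∈ (η1 * η2).primeFactors | ¬ p ∣ η4}
  have hP : ∀ t ∈ P.powerset, ∀ p ∈ t, p.Prime :=
    fun t => Nat.prime_of_mem_of_mem_powerset (filter_subset _ _)
  calc _ = ∑ k3 ∈ η1.divisors with k3.Coprime (η2 * η3), ((moebius k3 : ℤ) : ℝ) / k3 *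
        ∏ p ∈ (η1 * η2).primeFactors with ¬ p ∣ k3 * η4, (1 - 1 / (p : ℝ)) :=
        sum_congr rfl fun k3 _ => by rw [sum_divisors_coprime_moebius_div h12]
    _ = ∑ t ∈ P.powerset, (∏ p ∈ t, (-1 / (p : ℝ))) * ∏ p ∈ Q \ t, (1 - 1 / (p : ℝ)) := by
        rw [Nat.sum_divisors_filter_coprime_eq_sum_powerset h1.ne' _ fun k hk => by
          simp [moebius_eq_zero_of_not_squarefree hk]]
        refine sum_congr rfl fun t ht => ?_
        rw [moebius_div_prod_primes (hP t ht), Nat.filter_primeFactors_not_dvd_prod_mul (hP t ht)]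
    _ = (∏ p ∈ Q \ P, (1 - 1 / (p : ℝ))) *
          ∏ p ∈ P, (-1 / (p : ℝ) + if p ∈ Q then 1 - 1 / (p : ℝ) else 1) :=
        sum_powerset_prod_mul_prod_sdiff _ _ _ _
    _ = (∏ p ∈ Q \ P, (1 - 1 / (p : ℝ))) * ((∏ p ∈ P with p ∣ η4, (1 - 1 / (p : ℝ))) *
          ∏ p ∈ P with ¬ p ∣ η4, (1 - 2 / (p : ℝ))) :=
        congrArg _ <| prod_neg_one_div_add_ite_mem_filter_not_dvd <|
          (filter_subset _ _).trans (Nat.primeFactors_mono (dvd_mul_right _ _) h12)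
    _ = _ := by
        rw [← mul_assoc, ← phiStar_gcd_mul_phiStar h1.ne' h2.ne' h23 h24 h34, filter_filter]
        congr 2
        exact filter_congr fun p hp => by
          rw [← not_or, ← (Nat.prime_of_mem_primeFactors hp).dvd_mul]

theorem moebius_double_sum (η1 η2 η3 η4 : ℕ)
    (h1 : 0 < η1) (h2 : 0 < η2) (h3 : 0 < η3) (h4 : 0 < η4)
    (h23 : Nat.Coprime η2 η3) (h24 : Nat.Coprime η2 η4) (h34 : Nat.Coprime η3 η4) :
    (∑ k3 ∈ η1.divisors.filter (fun k => Nat.Coprime k (η2 * η3)),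
      ((moebius k3 : ℤ) : ℝ) / (k3 : ℝ) *
        ∑ k2 ∈ (η1 * η2).divisors.filter (fun k => Nat.Coprime k (k3 * η4)),
          ((moebius k2 : ℤ) : ℝ) / (k2 : ℝ))
      = phiStar (Nat.gcd η1 (η3 * η4)) * phiStar η2 *
          ∏ p ∈ η1.primeFactors.filter (fun p => ¬ p ∣ η2 * η3 * η4), (1 - 2 / (p : ℝ)) :=
  moebius_double_sum_general η1 η2 η3 η4 h1 h2 h23 h24 h34
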